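/- arXiv:1108.5533 — 3 statements merged into one kernel-verified Lean document; each statement's English description precedes it below -/
import Mathlib

section
/- Assume X satisfies UDP(S₀, κ₀, Δ) with 0 < κ₀ < 1/2, ‖X^⊤ε‖_∞ ≤ λ_n⁰, and λ_ℓ > λ_n⁰/(1−2κ₀). Let β^ℓ be a lasso minimizer for y = Xβ* + ε with parameter λ_ℓ. Then for every s ≤ S₀ and every subset S with |S| = s: ‖β^ℓ − β*‖₁ ≤ (2/((1 − λ_n⁰/λ_ℓ) − 2κ₀)) · (λ_ℓ Δ² s + ‖β*_{S^c}‖₁). -/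
open Finset Matrix

/- With h = β^ℓ − β*, comparing the lasso objective at β^ℓ and at β* gives the basic
inequality ½‖Xh‖² + λ‖β^ℓ‖₁ ≤ ⟨Xᵀε, h⟩ + λ‖β*‖₁. The noise term is at most λ⁰‖h‖₁, and the
triangle inequality gives ‖β*‖₁ − ‖β^ℓ‖₁ ≤ 2‖h_S‖₁ − ‖h‖₁ + 2‖β*_{Sᶜ}‖₁. UDP bounds ‖h_S‖₁ by
Δ√s‖Xh‖₂ + κ₀‖h‖₁, and 2λΔ√s‖Xh‖₂ ≤ ½‖Xh‖² + 2λ²Δ²s absorbs the prediction error. What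
remains is λ‖h‖₁ ≤ λ⁰‖h‖₁ + 2λκ₀‖h‖₁ + 2λ(λΔ²s + ‖β*_{Sᶜ}‖₁); divide by λ. -/

/-- The ℓ¹ norm of a vector. -/
noncomputable def l1 {p : ℕ} (v : Fin p → ℝ) : ℝ := ∑ i, |v i|

/-- The ℓ² norm of a vector. -/
noncomputable def l2 {n : ℕ} (v : Fin n → ℝ) : ℝ := Real.sqrt (∑ i, (v i) ^ 2)

/-- Restriction of a vector to a set of coordinates (zero elsewhere). -/
def restr {p : ℕ} (v : Fin p → ℝ) (S : Finset (Fin p)) : Fin p → ℝ :=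
  fun i => if i ∈ S then v i else 0

/-- The Universal Distortion Property UDP(S₀, κ₀, Δ). -/
def UDP {n p : ℕ} (X : Matrix (Fin n) (Fin p) ℝ) (S₀ κ₀ Δ : ℝ) : Prop :=
  ∀ γ : Fin p → ℝ, ∀ s : ℕ, 1 ≤ s → (s : ℝ) ≤ S₀ →
    ∀ S : Finset (Fin p), S.card = s →
      l1 (restr γ S) ≤ Δ * Real.sqrt s * l2 (X.mulVec γ) + κ₀ * l1 γ

lemma l1_restr_eq {p : ℕ} (v : Fin p → ℝ) (T : Finset (Fin p)) :
    l1 (restr v T) = ∑ i ∈ T, |v i| := by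
  unfold l1 restr
  rw [Finset.sum_congr rfl (fun i _ => by rw [apply_ite abs, abs_zero]),
    Finset.sum_ite_mem, Finset.univ_inter]

lemma l1_eq_l1_restr_add_l1_restr_compl {p : ℕ} (v : Fin p → ℝ) (S : Finset (Fin p)) :
    l1 v = l1 (restr v S) + l1 (restr v Sᶜ) := by
  rw [l1_restr_eq, l1_restr_eq, Finset.sum_add_sum_compl, l1]

lemma l1_sub_l1_le {p : ℕ} (u v : Fin p → ℝ) (S : Finset (Fin p)) :
    l1 v - l1 u ≤ 2 * l1 (restr (u - v) S) - l1 (u - v) + 2 * l1 (restr v Sᶜ) := by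
  have on_S : ∑ i ∈ S, (|v i| - |u i|) ≤ ∑ i ∈ S, |u i - v i| :=
    Finset.sum_le_sum fun i _ => by
      linarith [abs_sub_abs_le_abs_sub (v i) (u i), abs_sub_comm (u i) (v i)]
  have on_Sc : ∑ i ∈ Sᶜ, (|v i| - |u i|) ≤ ∑ i ∈ Sᶜ, (2 * |v i| - |u i - v i|) :=
    Finset.sum_le_sum fun i _ => by linarith [abs_sub (u i) (v i)]
  rw [Finset.sum_sub_distrib, Finset.sum_sub_distrib, ← Finset.mul_sum] at on_Sc
  rw [Finset.sum_sub_distrib] at on_S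
  rw [l1_eq_l1_restr_add_l1_restr_compl v S, l1_eq_l1_restr_add_l1_restr_compl u S,
    l1_eq_l1_restr_add_l1_restr_compl (u - v) S]
  simp only [l1_restr_eq, Pi.sub_apply]
  linarith

lemma l2_sq {n : ℕ} (v : Fin n → ℝ) : l2 v ^ 2 = ∑ i, v i ^ 2 :=
  Real.sq_sqrt (Finset.sum_nonneg fun i _ => sq_nonneg (v i))

lemma dotProduct_le_mul_l1 {p : ℕ} {w h : Fin p → ℝ} {c : ℝ} (hw : ∀ j, |w j| ≤ c) :
    w ⬝ᵥ h ≤ c * l1 h := by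
  rw [dotProduct, l1, Finset.mul_sum]
  refine Finset.sum_le_sum fun j _ => ?_
  calc w j * h j ≤ |w j| * |h j| := by rw [← abs_mul]; exact le_abs_self _
    _ ≤ c * |h j| := mul_le_mul_of_nonneg_right (hw j) (abs_nonneg _)

lemma lasso_basic_inequality {n p : ℕ} (X : Matrix (Fin n) (Fin p) ℝ)
    (βstar βl : Fin p → ℝ) (ε y : Fin n → ℝ) (lam : ℝ) (hy : y = X *ᵥ βstar + ε)
    (hopt : (1/2) * (∑ i, ((X *ᵥ βl) i - y i) ^ 2) + lam * l1 βl
      ≤ (1/2) * (∑ i, ((X *ᵥ βstar) i - y i) ^ 2) + lam * l1 βstar) :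
    (1/2) * l2 (X *ᵥ (βl - βstar)) ^ 2 + lam * l1 βl
      ≤ ε ⬝ᵥ (X *ᵥ (βl - βstar)) + lam * l1 βstar := by
  have residual : ∀ i, (X *ᵥ βl) i - y i = (X *ᵥ (βl - βstar)) i - ε i := by
    intro i; simp only [hy, mulVec_sub, Pi.add_apply, Pi.sub_apply]; ring
  have expand : ∑ i, ((X *ᵥ βl) i - y i) ^ 2
      = l2 (X *ᵥ (βl - βstar)) ^ 2 - 2 * (ε ⬝ᵥ (X *ᵥ (βl - βstar))) + ∑ i, ε i ^ 2 := by
    rw [l2_sq, dotProduct, Finset.mul_sum, ← Finset.sum_sub_distrib, ← Finset.sum_add_distrib]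
    exact Finset.sum_congr rfl fun i _ => by rw [residual i]; ring
  have at_βstar : ∑ i, ((X *ᵥ βstar) i - y i) ^ 2 = ∑ i, ε i ^ 2 :=
    Finset.sum_congr rfl fun i _ => by simp [hy]
  rw [expand, at_βstar] at hopt
  linarith

/-- Oracle inequality in ℓ¹ risk for the lasso under UDP (de Castro, Thm 2.1). -/
theorem stmt_4 (n p : ℕ) (X : Matrix (Fin n) (Fin p) ℝ)
    (S₀ κ₀ Δ : ℝ) (hκ₀ : 0 < κ₀ ∧ κ₀ < 1/2) (hudp : UDP X S₀ κ₀ Δ)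
    (βstar βl : Fin p → ℝ) (ε y : Fin n → ℝ) (lam lam0 : ℝ)
    (hy : y = X.mulVec βstar + ε)
    (hnoise : ∀ j, |Xᵀ.mulVec ε j| ≤ lam0) (hlam0 : 0 ≤ lam0)
    (hlam : lam > lam0 / (1 - 2 * κ₀))
    (hmin : ∀ β : Fin p → ℝ,
      (1/2) * (∑ i, (X.mulVec βl i - y i) ^ 2) + lam * l1 βl
        ≤ (1/2) * (∑ i, (X.mulVec β i - y i) ^ 2) + lam * l1 β) :
    ∀ s : ℕ, 1 ≤ s → (s : ℝ) ≤ S₀ → ∀ S : Finset (Fin p), S.card = s →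
      l1 (βl - βstar)
        ≤ (2 / ((1 - lam0 / lam) - 2 * κ₀)) * (lam * Δ ^ 2 * s + l1 (restr βstar Sᶜ)) := by
  intro s hs1 hsS S hcard
  have hκ : 0 < 1 - 2 * κ₀ := by linarith [hκ₀.2]
  have hlam_pos : 0 < lam := lt_of_le_of_lt (div_nonneg hlam0 hκ.le) hlam
  have hlam_mul : lam * ((1 - lam0 / lam) - 2 * κ₀) = lam - lam0 - 2 * lam * κ₀ := by
    field_simp
  have hc : 0 < (1 - lam0 / lam) - 2 * κ₀ :=
    pos_of_mul_pos_right (a := lam) (by rw [hlam_mul]; linarith [(div_lt_iff₀ hκ).mp hlam])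
      hlam_pos.le
  set h := βl - βstar
  have basic := lasso_basic_inequality X βstar βl ε y lam hy (hmin βstar)
  have noise : ε ⬝ᵥ (X *ᵥ h) ≤ lam0 * l1 h := by
    rw [dotProduct_mulVec, ← mulVec_transpose]; exact dotProduct_le_mul_l1 hnoise
  have cone := mul_le_mul_of_nonneg_left (l1_sub_l1_le βl βstar S) hlam_pos.le
  have udp := mul_le_mul_of_nonneg_left (hudp h s hs1 hsS S hcard) (by positivity : 0 ≤ 2 * lam)
  have amgm : 2 * lam * (Δ * √s * l2 (X *ᵥ h))
      ≤ (1/2) * l2 (X *ᵥ h) ^ 2 + 2 * lam ^ 2 * Δ ^ 2 * s := by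
    have hsq : (lam * Δ * √s) ^ 2 = lam ^ 2 * Δ ^ 2 * s := by
      rw [mul_pow, Real.sq_sqrt (Nat.cast_nonneg s), mul_pow]
    nlinarith [sq_nonneg (l2 (X *ᵥ h) - 2 * (lam * Δ * √s))]
  have key : lam * (((1 - lam0 / lam) - 2 * κ₀) * l1 h)
      ≤ lam * (2 * (lam * Δ ^ 2 * s + l1 (restr βstar Sᶜ))) := by
    rw [← mul_assoc, hlam_mul]
    linarith
  rw [div_mul_eq_mul_div, le_div_iff₀ hc, mul_comm]
  exact le_of_mul_le_mul_left key hlam_pos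
end

section
/- Assume X satisfies UDP(S₀, κ₀, Δ) with 0 < κ₀ < 1/4, ‖X^⊤ε‖_∞ ≤ λ⁰, and λ_d > λ⁰/(1−4κ₀). Let β^d be the Dantzig selector for y = Xβ* + ε with parameter λ_d. Then for every s ≤ S₀ and subset S with |S| = s: ‖β^d − β*‖₁ ≤ (4/((1 − λ⁰/λ_d) − 4κ₀)) · (λ_d Δ² s + ‖β*_{S^c}‖₁). -/
open Finset Matrix

/-!
Since `β*` is itself feasible, minimality gives `‖β^d‖₁ ≤ ‖β*‖₁`, which forces the error
`h = β^d - β*` into the cone `‖h‖₁ ≤ 2‖h_S‖₁ + 2‖β*_{Sᶜ}‖₁`. Both `β^d` and `β*` satisfy the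
Dantzig constraint, so `‖XᵀXh‖_∞ ≤ λ_d + λ⁰` and `‖Xh‖₂² = ⟨h, XᵀXh⟩ ≤ (λ_d + λ⁰)‖h‖₁`.
UDP bounds `‖h_S‖₁` by `Δ√s‖Xh‖₂ + κ₀‖h‖₁`, and `4λ_d Δ√s ‖Xh‖₂ ≤ ‖Xh‖₂² + 4λ_d²Δ²s`
absorbs the prediction error into the left-hand side.
-/

lemma l1_restr {p : ℕ} (v : Fin p → ℝ) (S : Finset (Fin p)) :
    l1 (restr v S) = ∑ i ∈ S, |v i| := by
  simp only [l1, restr, apply_ite, abs_zero, sum_ite_mem, univ_inter]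

lemma l1_restr_add_l1_restr_compl {p : ℕ} (v : Fin p → ℝ) (S : Finset (Fin p)) :
    l1 (restr v S) + l1 (restr v Sᶜ) = l1 v := by
  rw [l1_restr, l1_restr, sum_add_sum_compl, l1]

lemma restr_sub {p : ℕ} (u v : Fin p → ℝ) (S : Finset (Fin p)) :
    restr (u - v) S = restr u S - restr v S := by
  ext i
  by_cases hi : i ∈ S <;> simp [restr, hi]

lemma l1_sub_le {p : ℕ} (u v : Fin p → ℝ) : l1 (u - v) ≤ l1 u + l1 v := by
  rw [l1, l1, l1, ← sum_add_distrib]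
  exact sum_le_sum fun i _ => abs_sub _ _

lemma l1_sub_le_two_mul_l1_restr_add_of_l1_le {p : ℕ} {b β : Fin p → ℝ} (hle : l1 b ≤ l1 β)
    (S : Finset (Fin p)) :
    l1 (b - β) ≤ 2 * l1 (restr (b - β) S) + 2 * l1 (restr β Sᶜ) := by
  have hS : l1 (restr β S) ≤ l1 (restr b S) + l1 (restr (b - β) S) := by
    simpa only [restr_sub, sub_sub_cancel] using l1_sub_le (restr b S) (restr (b - β) S)
  have hSc : l1 (restr (b - β) Sᶜ) ≤ l1 (restr b Sᶜ) + l1 (restr β Sᶜ) := by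
    simpa only [restr_sub] using l1_sub_le (restr b Sᶜ) (restr β Sᶜ)
  linarith [l1_restr_add_l1_restr_compl b S, l1_restr_add_l1_restr_compl β S,
    l1_restr_add_l1_restr_compl (b - β) S]

lemma sq_l2 {n : ℕ} (v : Fin n → ℝ) : l2 v ^ 2 = v ⬝ᵥ v := by
  rw [l2, Real.sq_sqrt (sum_nonneg fun i _ => sq_nonneg _), dotProduct]
  simp only [sq]

lemma sq_l2_mulVec {n p : ℕ} (X : Matrix (Fin n) (Fin p) ℝ) (h : Fin p → ℝ) :
    l2 (X *ᵥ h) ^ 2 = h ⬝ᵥ (Xᵀ *ᵥ (X *ᵥ h)) := by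
  rw [sq_l2, dotProduct_mulVec h, vecMul_transpose]

lemma dotProduct_le_l1_mul {p : ℕ} {v w : Fin p → ℝ} {c : ℝ} (hw : ∀ i, |w i| ≤ c) :
    v ⬝ᵥ w ≤ l1 v * c := by
  rw [dotProduct, l1, sum_mul]
  refine sum_le_sum fun i _ => ?_
  calc v i * w i ≤ |v i * w i| := le_abs_self _
    _ = |v i| * |w i| := abs_mul _ _
    _ ≤ |v i| * c := mul_le_mul_of_nonneg_left (hw i) (abs_nonneg _)

def DantzigFeasible {n p : ℕ} (X : Matrix (Fin n) (Fin p) ℝ) (y : Fin n → ℝ) (lam : ℝ)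
    (β : Fin p → ℝ) : Prop :=
  ∀ j, |(Xᵀ *ᵥ (y - X *ᵥ β)) j| ≤ lam

namespace DantzigFeasible

variable {n p : ℕ} {X : Matrix (Fin n) (Fin p) ℝ} {y : Fin n → ℝ}

lemma mono {lam lam' : ℝ} {β : Fin p → ℝ} (hβ : DantzigFeasible X y lam β) (hle : lam ≤ lam') :
    DantzigFeasible X y lam' β :=
  fun j => (hβ j).trans hle

lemma abs_gram_mulVec_sub_le {lam₁ lam₂ : ℝ} {β₁ β₂ : Fin p → ℝ}
    (h₁ : DantzigFeasible X y lam₁ β₁) (h₂ : DantzigFeasible X y lam₂ β₂) (j : Fin p) :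
    |(Xᵀ *ᵥ (X *ᵥ (β₁ - β₂))) j| ≤ lam₁ + lam₂ := by
  have hres : X *ᵥ (β₁ - β₂) = (y - X *ᵥ β₂) - (y - X *ᵥ β₁) := by
    rw [mulVec_sub]
    abel
  rw [hres, mulVec_sub, Pi.sub_apply, add_comm]
  exact (abs_sub _ _).trans (add_le_add (h₂ j) (h₁ j))

lemma sq_l2_mulVec_sub_le {lam₁ lam₂ : ℝ} {β₁ β₂ : Fin p → ℝ}
    (h₁ : DantzigFeasible X y lam₁ β₁) (h₂ : DantzigFeasible X y lam₂ β₂) :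
    l2 (X *ᵥ (β₁ - β₂)) ^ 2 ≤ (lam₁ + lam₂) * l1 (β₁ - β₂) := by
  rw [sq_l2_mulVec, mul_comm]
  exact dotProduct_le_l1_mul (h₁.abs_gram_mulVec_sub_le h₂)

end DantzigFeasible

/-- `L`, `A`, `B`, `z` play the roles of `‖h‖₁`, `‖h_S‖₁`, `‖β*_{Sᶜ}‖₁`, `‖Xh‖₂`. -/
lemma le_four_div_mul_of_cone_of_energy {L A B z a κ lam lam0 : ℝ}
    (hcone : L ≤ 2 * A + 2 * B) (hA : A ≤ a * z + κ * L) (hz : z ^ 2 ≤ (lam + lam0) * L)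
    (hlam : 0 < lam) (hc : 0 < 1 - lam0 / lam - 4 * κ) :
    L ≤ 4 / (1 - lam0 / lam - 4 * κ) * (lam * a ^ 2 + B) := by
  rw [div_mul_eq_mul_div, le_div_iff₀ hc]
  have hamgm : 4 * lam * (a * z) ≤ z ^ 2 + 4 * lam ^ 2 * a ^ 2 := by
    nlinarith [sq_nonneg (z - 2 * lam * a)]
  have hscaled : lam * (L * (1 - lam0 / lam - 4 * κ)) = (lam - lam0 - 4 * κ * lam) * L := by
    field_simp
  refine le_of_mul_le_mul_left ?_ hlam
  rw [hscaled]
  nlinarith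

/-- Oracle inequality in ℓ¹ risk for the Dantzig selector under UDP (de Castro, Thm 2.4). -/
theorem stmt_9 (n p : ℕ) (X : Matrix (Fin n) (Fin p) ℝ)
    (S₀ κ₀ Δ : ℝ) (hκ₀ : 0 < κ₀ ∧ κ₀ < 1/4) (hudp : UDP X S₀ κ₀ Δ)
    (βstar βd : Fin p → ℝ) (ε y : Fin n → ℝ) (lamd lam0 : ℝ)
    (hy : y = X.mulVec βstar + ε)
    (hnoise : ∀ j, |Xᵀ.mulVec ε j| ≤ lam0) (hlam0 : 0 ≤ lam0)
    (hlam : lamd > lam0 / (1 - 4 * κ₀))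
    (hfeas : ∀ j, |Xᵀ.mulVec (y - X.mulVec βd) j| ≤ lamd)
    (hmin : ∀ β : Fin p → ℝ, (∀ j, |Xᵀ.mulVec (y - X.mulVec β) j| ≤ lamd) →
      l1 βd ≤ l1 β) :
    ∀ s : ℕ, 1 ≤ s → (s : ℝ) ≤ S₀ → ∀ S : Finset (Fin p), S.card = s →
      l1 (βd - βstar)
        ≤ (4 / ((1 - lam0 / lamd) - 4 * κ₀)) * (lamd * Δ ^ 2 * s + l1 (restr βstar Sᶜ)) := by
  intro s hs1 hsS S hScard
  obtain ⟨hκpos, hκlt⟩ := hκ₀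
  have h4κ : 0 < 1 - 4 * κ₀ := by linarith
  have hlam' : lam0 < lamd * (1 - 4 * κ₀) := (div_lt_iff₀ h4κ).1 hlam
  have hlamd : 0 < lamd := (div_nonneg hlam0 h4κ.le).trans_lt hlam
  have hc : 0 < 1 - lam0 / lamd - 4 * κ₀ := by
    have : lam0 / lamd < 1 - 4 * κ₀ := (div_lt_iff₀' hlamd).2 hlam'
    linarith
  have hstar : DantzigFeasible X y lam0 βstar := by
    simpa only [DantzigFeasible, hy, add_sub_cancel_left] using hnoise
  have hlam0d : lam0 ≤ lamd := by nlinarith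
  have hle : l1 βd ≤ l1 βstar := hmin βstar (hstar.mono hlam0d)
  have henergy := DantzigFeasible.sq_l2_mulVec_sub_le hfeas hstar
  have hbound := le_four_div_mul_of_cone_of_energy
    (l1_sub_le_two_mul_l1_restr_add_of_l1_le hle S) (hudp (βd - βstar) s hs1 hsS S hScard)
    henergy hlamd hc
  rwa [mul_pow, Real.sq_sqrt (Nat.cast_nonneg s), ← mul_assoc] at hbound
end

section
/- Assume X satisfies UDP(S₀, κ₀, Δ) with 0 < κ₀ < 1/4, ‖X^⊤ε‖_∞ ≤ λ⁰, and λ_d > λ⁰/(1−4κ₀). Then for every s ≤ S₀ and subset S with |S| = s, the Dantzig selector β^d satisfies ‖Xβ^d − Xβ*‖₂ ≤ 4λ_d Δ√s + ‖β*_{S^c}‖₁/(Δ√s). -/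
open Finset Matrix

/-!
Minimality against the feasible `β*` gives `‖βᵈ‖₁ ≤ ‖β*‖₁`, so `γ = βᵈ - β*` satisfies the cone
condition `‖γ‖₁ ≤ 2‖γ_S‖₁ + 2‖β*_{Sᶜ}‖₁`. Since `Xγ = ε - (y - Xβᵈ)`, we get
`‖XᵀXγ‖_∞ ≤ λ_d + λ⁰` and hence `‖Xγ‖₂² = ⟪XᵀXγ, γ⟫ ≤ (λ_d + λ⁰)‖γ‖₁`. Bounding `‖γ_S‖₁` by UDP in
the cone condition gives `(1 - 2κ₀)‖γ‖₁ ≤ 2Δ√s‖Xγ‖₂ + 2‖β*_{Sᶜ}‖₁`, and as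
`λ_d + λ⁰ ≤ 2(1 - 2κ₀)λ_d` this yields the quadratic inequality
`h² ≤ 4λ_dΔ√s · h + 4λ_d‖β*_{Sᶜ}‖₁` for `h = ‖Xγ‖₂`, which solves to the claim.
-/

lemma l1_nonneg {p : ℕ} (v : Fin p → ℝ) : 0 ≤ l1 v :=
  sum_nonneg fun _ _ => abs_nonneg _

lemma abs_restr {p : ℕ} (v : Fin p → ℝ) (S : Finset (Fin p)) (i : Fin p) :
    |restr v S i| = if i ∈ S then |v i| else 0 := by
  unfold restr
  split_ifs <;> simp

lemma l2_mulVec_sq {n p : ℕ} (X : Matrix (Fin n) (Fin p) ℝ) (γ : Fin p → ℝ) :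
    l2 (X *ᵥ γ) ^ 2 = (Xᵀ *ᵥ (X *ᵥ γ)) ⬝ᵥ γ := by
  rw [l2, Real.sq_sqrt (by positivity), mulVec_transpose, ← dotProduct_mulVec]
  simp only [dotProduct, sq]

lemma dotProduct_le_mul_l1_s10 {p : ℕ} {u : Fin p → ℝ} {C : ℝ} (hu : ∀ j, |u j| ≤ C)
    (γ : Fin p → ℝ) : u ⬝ᵥ γ ≤ C * l1 γ := by
  rw [l1, mul_sum]
  refine sum_le_sum fun i _ => ?_
  calc u i * γ i ≤ |u i| * |γ i| := abs_mul (u i) (γ i) ▸ le_abs_self _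
    _ ≤ C * |γ i| := mul_le_mul_of_nonneg_right (hu i) (abs_nonneg _)

lemma l1_sub_le_of_l1_le {p : ℕ} {β β' : Fin p → ℝ} (h : l1 β ≤ l1 β') (S : Finset (Fin p)) :
    l1 (β - β') ≤ 2 * l1 (restr (β - β') S) + 2 * l1 (restr β' Sᶜ) := by
  have hcoord : ∀ i, |(β - β') i| ≤
      |β i| - |β' i| + 2 * |restr (β - β') S i| + 2 * |restr β' Sᶜ i| := by
    intro i
    by_cases hi : i ∈ S
    · simp only [Pi.sub_apply, abs_restr, hi, ↓reduceIte, mem_compl, not_true_eq_false,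
        mul_zero, add_zero]
      linarith [abs_sub_abs_le_abs_sub (β' i) (β i), abs_sub_comm (β' i) (β i)]
    · simp only [Pi.sub_apply, abs_restr, hi, ↓reduceIte, mem_compl, not_false_eq_true,
        mul_zero, add_zero]
      linarith [abs_sub (β i) (β' i)]
  have hsum := sum_le_sum fun i (_ : i ∈ univ) => hcoord i
  simp only [sum_add_distrib, sum_sub_distrib, ← mul_sum] at hsum
  unfold l1 at h ⊢
  linarith

lemma abs_gram_mulVec_sub_le {n p : ℕ} {X : Matrix (Fin n) (Fin p) ℝ} {β β' : Fin p → ℝ}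
    {ε y : Fin n → ℝ} {lam lam' : ℝ} (hy : y = X *ᵥ β' + ε)
    (hnoise : ∀ j, |(Xᵀ *ᵥ ε) j| ≤ lam') (hfeas : ∀ j, |(Xᵀ *ᵥ (y - X *ᵥ β)) j| ≤ lam)
    (j : Fin p) : |(Xᵀ *ᵥ (X *ᵥ (β - β'))) j| ≤ lam + lam' := by
  have hres : X *ᵥ (β - β') = ε - (y - X *ᵥ β) := by
    rw [hy, mulVec_sub]
    abel
  rw [hres, mulVec_sub, Pi.sub_apply]
  linarith [abs_sub ((Xᵀ *ᵥ ε) j) ((Xᵀ *ᵥ (y - X *ᵥ β)) j), hnoise j, hfeas j]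

lemma le_mul_add_div_of_sq_le {x B a R : ℝ} (hB : 0 ≤ B) (ha : 0 < a) (hR : 0 ≤ R)
    (h : x ^ 2 ≤ B * a * x + B * R) : x ≤ B * a + R / a := by
  rw [← mul_div_cancel₀ R ha.ne'] at h
  nlinarith [div_nonneg hR ha.le, mul_nonneg hB ha.le]

/-- Oracle inequality in prediction error for the Dantzig selector under UDP
(de Castro, Thm 2.5). -/
theorem stmt_10 (n p : ℕ) (X : Matrix (Fin n) (Fin p) ℝ)
    (S₀ κ₀ Δ : ℝ) (hκ₀ : 0 < κ₀ ∧ κ₀ < 1/4) (hΔ : 0 < Δ) (hudp : UDP X S₀ κ₀ Δ)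
    (βstar βd : Fin p → ℝ) (ε y : Fin n → ℝ) (lamd lam0 : ℝ)
    (hy : y = X.mulVec βstar + ε)
    (hnoise : ∀ j, |Xᵀ.mulVec ε j| ≤ lam0) (hlam0 : 0 ≤ lam0)
    (hlam : lamd > lam0 / (1 - 4 * κ₀))
    (hfeas : ∀ j, |Xᵀ.mulVec (y - X.mulVec βd) j| ≤ lamd)
    (hmin : ∀ β : Fin p → ℝ, (∀ j, |Xᵀ.mulVec (y - X.mulVec β) j| ≤ lamd) →
      l1 βd ≤ l1 β) :
    ∀ s : ℕ, 1 ≤ s → (s : ℝ) ≤ S₀ → ∀ S : Finset (Fin p), S.card = s →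
      l2 (X.mulVec βd - X.mulVec βstar)
        ≤ 4 * lamd * Δ * Real.sqrt s + l1 (restr βstar Sᶜ) / (Δ * Real.sqrt s) := by
  intro s hs hsS S hS
  obtain ⟨hκ, hκ'⟩ := hκ₀
  have hlamd : 0 ≤ lamd := (div_nonneg hlam0 (by linarith)).trans hlam.le
  have hlam0d : lam0 ≤ (1 - 4 * κ₀) * lamd := by
    linarith [(div_lt_iff₀ (by linarith : 0 < 1 - 4 * κ₀)).mp hlam]
  have hstar : l1 βd ≤ l1 βstar := hmin βstar fun j => by
    rw [hy, add_sub_cancel_left]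
    exact (hnoise j).trans (by linarith [mul_nonneg hκ.le hlamd])
  have ha : 0 < Δ * √s := mul_pos hΔ (Real.sqrt_pos.mpr (by exact_mod_cast hs))
  set γ := βd - βstar
  set h := l2 (X *ᵥ γ)
  have hquad : h ^ 2 ≤ (lamd + lam0) * l1 γ := by
    rw [l2_mulVec_sq]
    exact dotProduct_le_mul_l1_s10 (abs_gram_mulVec_sub_le hy hnoise hfeas) γ
  have hcone := l1_sub_le_of_l1_le hstar S
  have hdist : (1 - 2 * κ₀) * l1 γ ≤ 2 * (Δ * √s) * h + 2 * l1 (restr βstar Sᶜ) := by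
    linarith [hudp γ s hs hsS S hS]
  have hkey : h ^ 2 ≤ 4 * lamd * (Δ * √s) * h + 4 * lamd * l1 (restr βstar Sᶜ) := by
    linarith [mul_le_mul_of_nonneg_right hlam0d (l1_nonneg γ),
      mul_le_mul_of_nonneg_left hdist hlamd]
  rw [← mulVec_sub]
  exact (le_mul_add_div_of_sq_le (by positivity) ha (l1_nonneg _) hkey).trans_eq (by ring)
end
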